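/- For all n ≥ 1, the following identity holds in ℚ(q)[x]: [n]_q · C_{n+1}(x|q) = ([2n-1]_q + x·q^{2n-1})·C_n(x|q) + Σ_{j=0}^{n-2} [n-j-1]_q · C̃_j(q) · C_{n-j}(x|q) · q^{2j+1}, where the sum is empty for n = 1. -/
import Mathlib


open Polynomial Finset

/-- The indeterminate `q`, as an element of the field of rational functions `ℚ(q)`. -/
noncomputable def qq : RatFunc ℚ := RatFunc.X

/-- The Carlitz–Riordan `q`-ballot numbers `f(n,k|q) ∈ ℤ[q]`:
`f(0,0|q) = 1`, `f(n,k|q) = 0` for `k > n`, and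
`f(n,k|q) = q·f(n,k-1|q) + q^k·f(n-1,k|q)` for `n ≥ k ≥ 0`, `(n,k) ≠ (0,0)`
(with `f(n,-1|q) = 0`, so `f(n,0|q) = f(n-1,0|q)`). -/
noncomputable def fq : ℕ → ℕ → Polynomial ℤ
  | 0, 0 => 1
  | 0, _ + 1 => 0
  | n + 1, 0 => fq n 0
  | n + 1, k + 1 =>
    if k + 1 ≤ n + 1 then
      Polynomial.X * fq (n + 1) k + Polynomial.X ^ (k + 1) * fq n (k + 1)
    else 0
  termination_by n k => (n, k)

/-- The `q`-integer `[k]_q = (q^k - 1)/(q - 1)` in `ℚ(q)`. -/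
noncomputable def qint (k : ℕ) : RatFunc ℚ := (qq ^ k - 1) / (qq - 1)

/-- The reversed `q`-Catalan number `C̃_j(q) = q^{j(j+1)/2}·f(j,j|q⁻¹)`. -/
noncomputable def ctilde (j : ℕ) : RatFunc ℚ :=
  qq ^ (j * (j + 1) / 2) * Polynomial.aeval qq⁻¹ (fq j j)

lemma qq_ne_zero : qq ≠ 0 := RatFunc.X_ne_zero

lemma qq_pow_ne_one {d : ℕ} (hd : d ≠ 0) : qq ^ d ≠ 1 := by
  intro h
  have : (Polynomial.X : Polynomial ℚ) ^ d = 1 := by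
    have h2 : algebraMap (Polynomial ℚ) (RatFunc ℚ) (Polynomial.X ^ d) =
        algebraMap (Polynomial ℚ) (RatFunc ℚ) 1 := by
      rw [map_pow, map_one, RatFunc.algebraMap_X]; exact h
    exact RatFunc.algebraMap_injective ℚ h2
  have := congrArg Polynomial.natDegree this
  simp [Polynomial.natDegree_X_pow] at this
  exact hd this

lemma qq_ne_one : qq ≠ 1 := by simpa using qq_pow_ne_one (d := 1) one_ne_zero

lemma qq_sub_one_ne_zero : qq - 1 ≠ 0 := sub_ne_zero.mpr qq_ne_one

lemma qint_succ (k : ℕ) : qint (k + 1) = qint k + qq ^ k := by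
  unfold qint
  rw [div_add' _ _ _ qq_sub_one_ne_zero, div_eq_div_iff qq_sub_one_ne_zero qq_sub_one_ne_zero]
  ring

lemma qint_zero : qint 0 = 0 := by simp [qint]

lemma qint_one : qint 1 = 1 := by
  rw [qint_succ, qint_zero]; simp

/-- triangle numbers -/
def T (k : ℕ) : ℕ := ∑ i ∈ range k, i

lemma T_succ (k : ℕ) : T (k + 1) = T k + k := Finset.sum_range_succ _ _

lemma twoT (k : ℕ) : 2 * T k + k = k * k := by
  induction k with
  | zero => simp [T]
  | succ k ih =>
    have h : (k+1) * (k+1) = k * k + 2*k + 1 := by ring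
    rw [T_succ]; omega

def ee (n k : ℕ) : ℕ := n * k - T k

lemma T_le (k n : ℕ) (h : k ≤ n) : T k ≤ n * k := by
  have h1 := twoT k
  have h2 : k * k ≤ n * k := Nat.mul_le_mul_right k h
  omega

noncomputable def G (n k : ℕ) : RatFunc ℚ :=
  qq ^ (ee n k) * Polynomial.aeval qq⁻¹ (fq n k)

lemma fq_eq_zero (n k : ℕ) (h : n < k) : fq n k = 0 := by
  match n, k with
  | 0, k + 1 => rw [fq]
  | n + 1, k + 1 =>
    rw [fq]
    rw [if_neg (by omega)]

lemma fq_zero_right (n : ℕ) : fq n 0 = 1 := by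
  induction n with
  | zero => rw [fq]
  | succ n ih => rw [fq]; exact ih

lemma fq_rec (n k : ℕ) (h : k ≤ n) :
    fq (n + 1) (k + 1) = Polynomial.X * fq (n + 1) k + Polynomial.X ^ (k + 1) * fq n (k + 1) := by
  rw [fq, if_pos (by omega)]

lemma G_eq_zero (n k : ℕ) (h : n < k) : G n k = 0 := by
  simp [G, fq_eq_zero n k h]

lemma G_zero_right (n : ℕ) : G n 0 = 1 := by
  simp [G, fq_zero_right, ee, T]

lemma ee_succ_right (n k : ℕ) (h : k ≤ n) :
    ee (n + 1) (k + 1) = ee (n + 1) k + (n - k) + 1 := by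
  unfold ee
  have h1 := T_succ k
  have h2 : (n+1) * (k+1) = (n+1)*k + (n+1) := by ring
  have h3 := T_le k (n+1) (by omega)
  omega

lemma ee_succ_left (n k : ℕ) (h : k ≤ n) :
    ee (n + 1) (k + 1) = ee n (k + 1) + (k + 1) := by
  unfold ee
  have h1 := T_succ k
  have h2 : (n+1) * (k+1) = n*(k+1) + (k+1) := by ring
  have ha := twoT (k+1)
  have hb : (k+1)*(k+1) = k*(k+1) + (k+1) := by ring
  have hc : k*(k+1) ≤ n*(k+1) := Nat.mul_le_mul_right _ h
  omega

lemma ee_diag (j : ℕ) : ee j j = j * (j + 1) / 2 := by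
  unfold ee
  have h1 := twoT j
  have h5 : j*(j+1)/2*2 = j*(j+1) :=
    Nat.div_mul_cancel (even_iff_two_dvd.mp (Nat.even_mul_succ_self j))
  have h6 : j*(j+1) = j*j + j := by ring
  omega

lemma ctilde_eq_G (j : ℕ) : ctilde j = G j j := by
  rw [ctilde, G, ee_diag]

lemma G_rec (n k : ℕ) (h : k ≤ n) :
    G (n + 1) (k + 1) = qq ^ (n - k) * G (n + 1) k + G n (k + 1) := by
  have hr := fq_rec n k h
  have hf := congrArg (Polynomial.aeval (qq⁻¹ : RatFunc ℚ)) hr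
  simp only [map_add, map_mul, map_pow, Polynomial.aeval_X] at hf
  have hee : ee (n+1) k + (n-k) + 1 = ee n (k+1) + (k+1) := by
    rw [← ee_succ_right n k h, ee_succ_left n k h]
  unfold G
  rw [hf, ee_succ_right n k h]
  have h1 : qq ^ (ee (n+1) k + (n-k) + 1) * qq⁻¹ = qq^(n-k) * qq^(ee (n+1) k) := by
    rw [pow_succ, mul_assoc, mul_inv_cancel₀ qq_ne_zero, mul_one, pow_add]
    ring
  have h2 : qq ^ (ee (n+1) k + (n-k) + 1) * qq⁻¹^(k+1) = qq^(ee n (k+1)) := by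
    rw [hee, pow_add, mul_assoc, ← mul_pow, mul_inv_cancel₀ qq_ne_zero, one_pow, mul_one]
  rw [mul_add, ← mul_assoc, ← mul_assoc, h1, h2, mul_assoc]
lemma Gid : ∀ n k : ℕ, k < n →
    G n k = ∑ j ∈ Finset.range (k + 1), qq ^ (k - j) * G j j * G (n - 1 - j) (k - j) := by
  intro n
  induction n with
  | zero => intro k hk; omega
  | succ n ihn =>
    intro k
    induction k with
    | zero =>
      intro _
      simp [G_zero_right]
    | succ k ihk =>
      intro hk
      simp only [Nat.add_sub_cancel] at ihk ⊢
      have hrec : G (n + 1) (k + 1) = qq ^ (n - k) * G (n + 1) k + G n (k + 1) :=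
        G_rec n k (by omega)
      have hGk := ihk (by omega)
      have hsplit : ∀ j ∈ Finset.range (k + 1),
          qq ^ (k + 1 - j) * G j j * G (n - j) (k + 1 - j) =
            qq ^ (n - k) * (qq ^ (k - j) * G j j * G (n - j) (k - j)) +
              qq ^ (k + 1 - j) * G j j * G (n - 1 - j) (k + 1 - j) := by
        intro j hj
        rw [Finset.mem_range] at hj
        have hjk : j ≤ k := by omega
        have hr := G_rec (n - 1 - j) (k - j) (by omega)
        have e1 : n - 1 - j + 1 = n - j := by omega
        have e2 : k - j + 1 = k + 1 - j := by omega
        have e3 : n - 1 - j - (k - j) = n - 1 - k := by omega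
        rw [e1, e2, e3] at hr
        have hpow : qq ^ (k + 1 - j) * qq ^ (n - 1 - k) = qq ^ (n - k) * qq ^ (k - j) := by
          rw [← pow_add, ← pow_add]
          congr 1
          omega
        linear_combination qq ^ (k + 1 - j) * G j j * hr + G j j * G (n - j) (k - j) * hpow
      rw [Finset.sum_range_succ, Finset.sum_congr rfl hsplit, Finset.sum_add_distrib,
        ← Finset.mul_sum, ← hGk, hrec]
      have htail : (∑ j ∈ Finset.range (k + 1),
            qq ^ (k + 1 - j) * G j j * G (n - 1 - j) (k + 1 - j)) +
            qq ^ (k + 1 - (k + 1)) * G (k + 1) (k + 1) * G (n - (k + 1)) (k + 1 - (k + 1)) =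
          G n (k + 1) := by
        rcases Nat.lt_or_ge (k + 1) n with hlt | hge
        · rw [ihn (k + 1) hlt]
          conv_rhs => rw [Finset.sum_range_succ]
          simp only [Nat.sub_self, pow_zero, one_mul, G_zero_right, mul_one]
        · have hn : n = k + 1 := by omega
          subst hn
          rw [Finset.sum_eq_zero]
          · simp only [Nat.sub_self, pow_zero, one_mul, G_zero_right, mul_one, zero_add]
          · intro j hj
            rw [Finset.mem_range] at hj
            rw [G_eq_zero (k + 1 - 1 - j) (k + 1 - j) (by omega)]
            ring
      rw [← htail]
      ring
lemma catalanG (n : ℕ) :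
    G (n + 1) (n + 1) = ∑ j ∈ Finset.range (n + 1), qq ^ (n - j) * G j j * G (n - j) (n - j) := by
  have h1 : G (n + 1) (n + 1) = qq ^ (n - n) * G (n + 1) n + G n (n + 1) := G_rec n n le_rfl
  rw [G_eq_zero n (n + 1) (by omega), Nat.sub_self, pow_zero, one_mul, add_zero] at h1
  rw [h1, Gid (n + 1) n (by omega)]
  simp only [Nat.add_sub_cancel]
lemma ctilde_zero : ctilde 0 = 1 := by
  rw [ctilde, show fq 0 0 = 1 from by rw [fq]]
  simp
lemma ctilde_cat (n : ℕ) :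
    ctilde (n + 1) = ∑ j ∈ Finset.range (n + 1), qq ^ j * ctilde j * ctilde (n - j) := by
  rw [ctilde_eq_G, catalanG, ← Finset.sum_range_reflect]
  simp only [Nat.add_sub_cancel]
  refine Finset.sum_congr rfl fun j hj => ?_
  rw [Finset.mem_range] at hj
  have e1 : n - (n - j) = j := by omega
  rw [e1, ctilde_eq_G, ctilde_eq_G]
  ring
lemma ctilde_one : ctilde 1 = 1 := by
  rw [show (1:ℕ) = 0 + 1 from rfl, ctilde_cat]
  simp [ctilde_zero]
noncomputable def sg : Polynomial (RatFunc ℚ) := Polynomial.C qq⁻¹ * Polynomial.X - Polynomial.C qq⁻¹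
noncomputable def tp : Polynomial (RatFunc ℚ) := Polynomial.C qq * Polynomial.X + 1
noncomputable def up : Polynomial (RatFunc ℚ) := 1 + Polynomial.C (qq - 1) * Polynomial.X

lemma qqinv_ne_zero : (qq⁻¹ : RatFunc ℚ) ≠ 0 := inv_ne_zero qq_ne_zero

lemma CC_inv : (Polynomial.C qq) * Polynomial.C qq⁻¹ = (1 : Polynomial (RatFunc ℚ)) := by
  rw [← C_mul, mul_inv_cancel₀ qq_ne_zero, C_1]

lemma tp_comp_sg : tp.comp sg = Polynomial.X := by
  unfold tp sg
  simp only [add_comp, mul_comp, C_comp, X_comp, one_comp, sub_comp]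
  linear_combination (Polynomial.X - 1 : Polynomial (RatFunc ℚ)) * CC_inv

lemma sg_comp_tp : sg.comp tp = Polynomial.X := by
  unfold tp sg
  simp only [add_comp, mul_comp, C_comp, X_comp, one_comp, sub_comp]
  linear_combination (Polynomial.X : Polynomial (RatFunc ℚ)) * CC_inv

lemma comp_sg_tp (f : Polynomial (RatFunc ℚ)) : (f.comp sg).comp tp = f := by
  rw [Polynomial.comp_assoc, sg_comp_tp, Polynomial.comp_X]

lemma comp_tp_sg (f : Polynomial (RatFunc ℚ)) : (f.comp tp).comp sg = f := by
  rw [Polynomial.comp_assoc, tp_comp_sg, Polynomial.comp_X]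

lemma up_comp_sg : up.comp sg = Polynomial.C qq⁻¹ * up := by
  unfold up sg
  simp only [add_comp, mul_comp, C_comp, X_comp, one_comp, sub_comp]
  have hd : (Polynomial.C (qq - 1)) * Polynomial.C qq⁻¹ =
      (1 : Polynomial (RatFunc ℚ)) - Polynomial.C qq⁻¹ := by
    rw [← C_mul, show (qq - 1) * qq⁻¹ = 1 - qq⁻¹ by rw [sub_mul, mul_inv_cancel₀ qq_ne_zero, one_mul], map_sub, C_1]
  linear_combination -hd

lemma up_comp_tp : up.comp tp = Polynomial.C qq * up := by
  unfold up tp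
  simp only [add_comp, mul_comp, C_comp, X_comp, one_comp]
  have he : (Polynomial.C (qq - 1) : Polynomial (RatFunc ℚ)) = Polynomial.C qq - 1 := by
    rw [map_sub, C_1]
  linear_combination he

lemma sum_comp' {ι : Type*} (s : Finset ι) (p : ι → Polynomial (RatFunc ℚ))
    (r : Polynomial (RatFunc ℚ)) : (∑ i ∈ s, p i).comp r = ∑ i ∈ s, (p i).comp r := by
  simp only [Polynomial.comp, Polynomial.eval₂_finset_sum]

lemma sg_natDegree : sg.natDegree = 1 := by
  unfold sg
  rw [show Polynomial.C qq⁻¹ * Polynomial.X - Polynomial.C qq⁻¹ =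
    Polynomial.C qq⁻¹ * Polynomial.X + Polynomial.C (-qq⁻¹) by rw [map_neg]; ring]
  exact Polynomial.natDegree_linear qqinv_ne_zero

lemma sg_leadingCoeff : sg.leadingCoeff = qq⁻¹ := by
  unfold sg
  rw [show Polynomial.C qq⁻¹ * Polynomial.X - Polynomial.C qq⁻¹ =
    Polynomial.C qq⁻¹ * Polynomial.X + Polynomial.C (-qq⁻¹) by rw [map_neg]; ring]
  exact Polynomial.leadingCoeff_linear qqinv_ne_zero

lemma uniq (f : Polynomial (RatFunc ℚ)) (hfix : f.comp sg = f)
    (hev : f.eval (-qq⁻¹) = 0) : f = 0 := by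
  by_contra hf
  have hd : f.natDegree = 0 := by
    by_contra hd
    have hl := Polynomial.leadingCoeff_comp (p := f) (q := sg) (by rw [sg_natDegree]; omega)
    rw [hfix, sg_leadingCoeff] at hl
    have hlc : f.leadingCoeff ≠ 0 := Polynomial.leadingCoeff_ne_zero.mpr hf
    have h1 : f.leadingCoeff * ((qq⁻¹) ^ f.natDegree - 1) = 0 := by linear_combination -hl
    rcases mul_eq_zero.mp h1 with h | h
    · exact hlc h
    · have h2 : (qq⁻¹ : RatFunc ℚ) ^ f.natDegree = 1 := by linear_combination h
      rw [inv_pow] at h2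
      have : qq ^ f.natDegree = 1 := by
        rw [← inv_inv (qq ^ f.natDegree), h2]; simp
      exact qq_pow_ne_one hd this
  have hC := Polynomial.eq_C_of_natDegree_eq_zero hd
  rw [hC] at hev hf
  rw [Polynomial.eval_C] at hev
  rw [hev] at hf
  simp at hf
lemma sg_eval_zero : sg.eval 0 = -qq⁻¹ := by simp [sg]
lemma sg_eval_one : sg.eval 1 = 0 := by simp [sg]
lemma tp_eval_zero : tp.eval 0 = 1 := by simp [tp]
lemma up_eval_zero : up.eval 0 = 1 := by simp [up]
lemma tp_eval_neg : tp.eval (-qq⁻¹) = 0 := by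
  unfold tp
  rw [eval_add, eval_mul, eval_C, eval_X, eval_one, mul_neg, mul_inv_cancel₀ qq_ne_zero]
  ring
lemma up_eval_neg : up.eval (-qq⁻¹) = qq⁻¹ := by
  unfold up
  rw [eval_add, eval_one, eval_mul, eval_C, eval_X, mul_neg, sub_mul,
    mul_inv_cancel₀ qq_ne_zero]
  ring
lemma he_C : (Polynomial.C (qq - 1) : Polynomial (RatFunc ℚ)) = Polynomial.C qq - 1 := by
  rw [map_sub, C_1]
lemma hCC_pow (a : ℕ) :
    (Polynomial.C (qq ^ (a + 1)) : Polynomial (RatFunc ℚ)) * Polynomial.C qq⁻¹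
      = Polynomial.C (qq ^ a) := by
  rw [← C_mul, pow_succ, mul_assoc, mul_inv_cancel₀ qq_ne_zero, mul_one]
lemma oneqx_comp_sg : (1 + Polynomial.C qq * Polynomial.X).comp sg = Polynomial.X := by
  simp only [add_comp, mul_comp, C_comp, X_comp, one_comp]
  unfold sg
  linear_combination (Polynomial.X - 1 : Polynomial (RatFunc ℚ)) * CC_inv

lemma Cs_two (Cs : ℕ → Polynomial (RatFunc ℚ))
    (h1 : Cs 1 = 1)
    (h2 : ∀ n, 2 ≤ n → (Cs n).eval (-qq⁻¹) = 0)
    (h3 : ∀ n, 1 ≤ n → Cs (n + 1) - (Cs (n + 1)).comp sg = up * (Cs n).comp tp) :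
    Cs 2 = 1 + Polynomial.C qq * Polynomial.X := by
  have h30 := h3 1 le_rfl
  rw [h1, one_comp, mul_one] at h30
  have hfix : (Cs 2 - (1 + Polynomial.C qq * Polynomial.X)).comp sg
      = Cs 2 - (1 + Polynomial.C qq * Polynomial.X) := by
    rw [sub_comp, oneqx_comp_sg]
    have hc : (Cs 2).comp sg = Cs 2 - up := by linear_combination -h30
    rw [hc]
    unfold up
    linear_combination (-Polynomial.X : Polynomial (RatFunc ℚ)) * he_C
  have hev : (Cs 2 - (1 + Polynomial.C qq * Polynomial.X)).eval (-qq⁻¹) = 0 := by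
    rw [eval_sub, h2 2 le_rfl]
    simp [mul_inv_cancel₀ qq_ne_zero]
  have := uniq _ hfix hev
  linear_combination this

lemma key (Cs : ℕ → Polynomial (RatFunc ℚ))
    (h1 : Cs 1 = 1)
    (h2 : ∀ n, 2 ≤ n → (Cs n).eval (-qq⁻¹) = 0)
    (h3 : ∀ n, 1 ≤ n → Cs (n + 1) - (Cs (n + 1)).comp sg = up * (Cs n).comp tp) :
    ∀ m, 1 ≤ m →
      (Cs m).eval 1 = ctilde m ∧ (Cs m).eval 0 = ctilde (m - 1) ∧
        Cs (m + 1) - Polynomial.C (qq ^ m) * (Cs (m + 1)).comp sg =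
          ∑ j ∈ Finset.range m, Polynomial.C (qq ^ (m - 1 - j) * ctilde (m - 1 - j)) * Cs (j + 1) := by
  intro m
  induction m using Nat.strong_induction_on with
  | _ m IH =>
  intro hm
  match m, hm with
  | 1, _ =>
    refine ⟨?_, ?_, ?_⟩
    · rw [h1, ctilde_one]; simp
    · rw [h1, ctilde_zero]; simp
    · have hc2 := Cs_two Cs h1 h2 h3
      rw [Finset.sum_range_one, hc2, h1]
      rw [show (1:ℕ) - 1 - 0 = 0 from rfl, ctilde_zero, oneqx_comp_sg]
      rw [pow_one, pow_zero]
      simp only [one_mul, mul_one, C_1]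
      ring
  | (t+2), _ =>
    obtain ⟨ihe1, ihe0, ihstar⟩ := IH (t+1) (by omega) (by omega)
    simp only [show ∀ j:ℕ, t+1-1-j = t-j from fun j => by omega] at ihstar
    -- eval0 at t+2
    have heval0 : (Cs (t+2)).eval 0 = ctilde (t+1) := by
      have h3m := congrArg (Polynomial.eval (0 : RatFunc ℚ)) (h3 (t+1) (by omega))
      simp only [eval_sub, eval_mul, Polynomial.eval_comp, sg_eval_zero, tp_eval_zero,
        up_eval_zero, one_mul] at h3m
      rw [h2 (t+2) (by omega), ihe1] at h3m
      linear_combination h3m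
    -- eval1 at t+2
    have heval1 : (Cs (t+2)).eval 1 = ctilde (t+2) := by
      have hst := congrArg (Polynomial.eval (1 : RatFunc ℚ)) ihstar
      simp only [eval_sub, eval_mul, eval_C, Polynomial.eval_comp, sg_eval_one,
        Polynomial.eval_finset_sum] at hst
      rw [heval0] at hst
      have hsum : ∀ j ∈ Finset.range (t+1),
          qq ^ (t - j) * ctilde (t - j) * (Cs (j + 1)).eval 1
            = qq ^ (t - j) * ctilde (t - j) * ctilde (j + 1) := by
        intro j hj
        rw [(IH (j+1) (by rw [Finset.mem_range] at hj; omega) (by omega)).1]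
      rw [Finset.sum_congr rfl hsum] at hst
      rw [ctilde_cat (t+1), Finset.sum_range_succ]
      have hrefl : ∑ j ∈ Finset.range (t+1), qq ^ j * ctilde j * ctilde (t + 1 - j)
          = ∑ j ∈ Finset.range (t+1), qq ^ (t - j) * ctilde (t - j) * ctilde (j + 1) := by
        rw [← Finset.sum_range_reflect]
        refine Finset.sum_congr rfl fun j hj => ?_
        rw [Finset.mem_range] at hj
        rw [show t + 1 - 1 - j = t - j from by omega, show t + 1 - (t - j) = j + 1 from by omega]
      rw [hrefl, show t + 1 - (t + 1) = 0 from by omega, ctilde_zero]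
      linear_combination hst
    refine ⟨heval1, by rw [show t+2-1 = t+1 from rfl]; exact heval0, ?_⟩
    -- star at level t+3
    simp only [show ∀ j:ℕ, t+2-1-j = t+1-j from fun j => by omega]
    rw [show t+1+1 = t+2 from rfl] at ihstar
    have hA1 : (Cs (t+2+1)).comp sg = Cs (t+2+1) - up * (Cs (t+2)).comp tp := by
      linear_combination -(h3 (t+2) (by omega))
    have hA2 : ((Cs (t+2+1)).comp sg).comp sg
        = (Cs (t+2+1)).comp sg - Polynomial.C qq⁻¹ * up * Cs (t+2) := by
      conv_lhs => rw [hA1]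
      rw [sub_comp, mul_comp, up_comp_sg, comp_tp_sg]
    have hterm : ∀ j ∈ Finset.range (t+1),
        Polynomial.C (qq ^ (t + 1 - (j+1)) * ctilde (t + 1 - (j+1))) * (Cs (j + 1 + 1)).comp sg
          = Polynomial.C (qq ^ (t - j) * ctilde (t - j)) * Cs (j + 1 + 1)
            - up * (Polynomial.C (qq ^ (t - j) * ctilde (t - j)) * (Cs (j + 1)).comp tp) := by
      intro j hj
      rw [show t + 1 - (j+1) = t - j from by omega]
      have hcj : (Cs (j + 1 + 1)).comp sg = Cs (j + 1 + 1) - up * (Cs (j + 1)).comp tp := by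
        linear_combination -(h3 (j+1) (by omega))
      rw [hcj]
      ring
    have hco : ∀ j ∈ Finset.range (t+1),
        Polynomial.C (qq ^ (t + 1 - (j+1)) * ctilde (t + 1 - (j+1))) * Cs (j + 1 + 1)
          = Polynomial.C (qq ^ (t - j) * ctilde (t - j)) * Cs (j + 1 + 1) := by
      intro j hj
      rw [show t + 1 - (j+1) = t - j from by omega]
    have hSRcomp : (∑ j ∈ Finset.range (t+2),
          Polynomial.C (qq ^ (t + 1 - j) * ctilde (t + 1 - j)) * Cs (j + 1)).comp sg
        = (∑ j ∈ Finset.range (t+2),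
            Polynomial.C (qq ^ (t + 1 - j) * ctilde (t + 1 - j)) * Cs (j + 1))
          - up * ((∑ j ∈ Finset.range (t+1),
              Polynomial.C (qq ^ (t - j) * ctilde (t - j)) * Cs (j + 1)).comp tp) := by
      rw [sum_comp', sum_comp']
      simp only [mul_comp, C_comp]
      rw [Finset.sum_range_succ'
        (fun j => Polynomial.C (qq ^ (t + 1 - j) * ctilde (t + 1 - j)) * (Cs (j + 1)).comp sg) (t+1)]
      conv_rhs => rw [Finset.sum_range_succ'
        (fun j => Polynomial.C (qq ^ (t + 1 - j) * ctilde (t + 1 - j)) * Cs (j + 1)) (t+1)]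
      rw [Finset.sum_congr rfl hterm, Finset.sum_congr rfl hco]
      rw [Finset.sum_sub_distrib, ← Finset.mul_sum, h1, one_comp]
      ring
    have hdiff : (Cs (t+2+1) - Polynomial.C (qq ^ (t+2)) * (Cs (t+2+1)).comp sg -
          ∑ j ∈ Finset.range (t+2), Polynomial.C (qq ^ (t + 1 - j) * ctilde (t + 1 - j)) * Cs (j + 1))
        - (Cs (t+2+1) - Polynomial.C (qq ^ (t+2)) * (Cs (t+2+1)).comp sg -
          ∑ j ∈ Finset.range (t+2), Polynomial.C (qq ^ (t + 1 - j) * ctilde (t + 1 - j)) * Cs (j + 1)).comp sg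
        = up * ((Cs (t+2) - Polynomial.C (qq ^ (t+1)) * (Cs (t+2)).comp sg -
            ∑ j ∈ Finset.range (t+1),
              Polynomial.C (qq ^ (t - j) * ctilde (t - j)) * Cs (j + 1)).comp tp) := by
      simp only [sub_comp, mul_comp, C_comp]
      rw [comp_sg_tp]
      linear_combination (Polynomial.C (qq ^ (t+2))) * hA2 + hSRcomp - hA1
        - (up * Cs (t+2)) * hCC_pow (t+1)
    have hW0 : Cs (t+2) - Polynomial.C (qq ^ (t+1)) * (Cs (t+2)).comp sg -
        ∑ j ∈ Finset.range (t+1), Polynomial.C (qq ^ (t - j) * ctilde (t - j)) * Cs (j + 1) = 0 := by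
      linear_combination ihstar
    rw [hW0, zero_comp, mul_zero] at hdiff
    have hfix : (Cs (t+2+1) - Polynomial.C (qq ^ (t+2)) * (Cs (t+2+1)).comp sg -
          ∑ j ∈ Finset.range (t+2), Polynomial.C (qq ^ (t + 1 - j) * ctilde (t + 1 - j)) * Cs (j + 1)).comp sg
        = Cs (t+2+1) - Polynomial.C (qq ^ (t+2)) * (Cs (t+2+1)).comp sg -
          ∑ j ∈ Finset.range (t+2), Polynomial.C (qq ^ (t + 1 - j) * ctilde (t + 1 - j)) * Cs (j + 1) := by
      linear_combination -hdiff
    have hev : (Cs (t+2+1) - Polynomial.C (qq ^ (t+2)) * (Cs (t+2+1)).comp sg -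
          ∑ j ∈ Finset.range (t+2),
            Polynomial.C (qq ^ (t + 1 - j) * ctilde (t + 1 - j)) * Cs (j + 1)).eval (-qq⁻¹) = 0 := by
      have h3e := congrArg (Polynomial.eval (-qq⁻¹ : RatFunc ℚ)) (h3 (t+2) (by omega))
      simp only [eval_sub, eval_mul, Polynomial.eval_comp, tp_eval_neg, up_eval_neg] at h3e
      rw [h2 (t+2+1) (by omega), heval0] at h3e
      have hSRev : (∑ j ∈ Finset.range (t+2),
          Polynomial.C (qq ^ (t + 1 - j) * ctilde (t + 1 - j)) * Cs (j + 1)).eval (-qq⁻¹)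
            = qq ^ (t+1) * ctilde (t+1) := by
        rw [Polynomial.eval_finset_sum]
        simp only [eval_mul, eval_C]
        rw [Finset.sum_range_succ'
          (fun j => qq ^ (t + 1 - j) * ctilde (t + 1 - j) * (Cs (j + 1)).eval (-qq⁻¹)) (t+1)]
        rw [Finset.sum_eq_zero, h1]
        · simp
        · intro j hj
          rw [h2 (j+1+1) (by omega)]
          ring
      simp only [eval_sub, eval_mul, eval_C, Polynomial.eval_comp]
      rw [h2 (t+2+1) (by omega), hSRev]
      have hq : qq ^ (t+2) * qq⁻¹ = qq ^ (t+1) := by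
        rw [pow_succ, mul_assoc, mul_inv_cancel₀ qq_ne_zero, mul_one]
      linear_combination (qq ^ (t+2)) * h3e + ctilde (t+1) * hq
    have := uniq _ hfix hev
    linear_combination this
lemma main (Cs : ℕ → Polynomial (RatFunc ℚ))
    (h1 : Cs 1 = 1)
    (h2 : ∀ n, 2 ≤ n → (Cs n).eval (-qq⁻¹) = 0)
    (h3 : ∀ n, 1 ≤ n → Cs (n + 1) - (Cs (n + 1)).comp sg = up * (Cs n).comp tp) :
    ∀ n, 1 ≤ n →
      Polynomial.C (qint n) * Cs (n + 1) =
        (Polynomial.C (qint (2 * n - 1)) + Polynomial.C (qq ^ (2 * n - 1)) * Polynomial.X) *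
            Cs n +
          ∑ j ∈ Finset.range (n - 1),
            Polynomial.C (qint (n - j - 1) * ctilde j * qq ^ (2 * j + 1)) * Cs (n - j) := by
  intro n hn
  induction n, hn using Nat.le_induction with
  | base =>
    rw [show 2 * 1 - 1 = 1 from rfl, show (1:ℕ) - 1 = 0 from rfl, Finset.range_zero,
      Finset.sum_empty, qint_one, Cs_two Cs h1 h2 h3, h1, pow_one, C_1]
    ring
  | succ n hn IH =>
    rw [show 2 * (n + 1) - 1 = 2 * n + 1 from by omega, show n + 1 - 1 = n from rfl]
    simp only [show ∀ j : ℕ, n + 1 - j - 1 = n - j from fun j => by omega]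
    obtain ⟨-, -, hstar⟩ := key Cs h1 h2 h3 n hn
    -- scalar facts
    have hCs1 : (Polynomial.C (qint (n+1)) : Polynomial (RatFunc ℚ))
        = Polynomial.C (qint n) + Polynomial.C (qq ^ n) := by rw [qint_succ, map_add]
    have hs2 : qint (2*n) = qint (2*n-1) + qq ^ (2*n-1) := by
      have h := qint_succ (2*n-1)
      rwa [show 2*n-1+1 = 2*n from by omega] at h
    have hCs2 : (Polynomial.C (qint (2*n)) : Polynomial (RatFunc ℚ))
        = Polynomial.C (qint (2*n-1)) + Polynomial.C (qq ^ (2*n-1)) := by rw [hs2, map_add]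
    have hCs3 : (Polynomial.C (qint (2*n+1)) : Polynomial (RatFunc ℚ))
        = Polynomial.C (qint (2*n)) + Polynomial.C (qq ^ (2*n)) := by
      rw [qint_succ (2*n), map_add]
    have hpow2 : (Polynomial.C (qq ^ (2*n-1)) : Polynomial (RatFunc ℚ)) * Polynomial.C qq
        = Polynomial.C (qq ^ (2*n)) := by
      rw [← C_mul, ← pow_succ, show 2*n-1+1 = 2*n from by omega]
    have hpow3 : (Polynomial.C (qq ^ (2*n)) : Polynomial (RatFunc ℚ))
        = Polynomial.C (qq ^ n) * Polynomial.C (qq ^ n) := by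
      rw [← C_mul, ← pow_add, show n + n = 2*n from by omega]
    have hc2' : (Polynomial.C (qq ^ (2*n)) : Polynomial (RatFunc ℚ)) * Polynomial.C qq
        = Polynomial.C (qq ^ (2*n+1)) := by rw [← C_mul, ← pow_succ]
    have hup : up = 1 + (Polynomial.C qq - 1) * Polynomial.X := by unfold up; rw [he_C]
    -- reflections
    have hrB : ∑ j ∈ Finset.range n,
          Polynomial.C (qint (n-j) * ctilde j * qq ^ (2*j+1)) * Cs (n-j)
        = ∑ j ∈ Finset.range n,
          Polynomial.C (qint (j+1) * ctilde (n-1-j) * qq ^ (2*(n-1-j)+1)) * Cs (j+1) := by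
      rw [← Finset.sum_range_reflect
        (fun j => Polynomial.C (qint (j+1) * ctilde (n-1-j) * qq ^ (2*(n-1-j)+1)) * Cs (j+1)) n]
      refine Finset.sum_congr rfl fun j hj => ?_
      rw [Finset.mem_range] at hj
      rw [show n-1-j+1 = n-j from by omega, show n-1-(n-1-j) = j from by omega]
    have hrI : ∑ j ∈ Finset.range (n-1),
          Polynomial.C (qint (n-j-1) * ctilde j * qq ^ (2*j+1)) * Cs (n-j)
        = ∑ j ∈ Finset.range (n-1),
          Polynomial.C (qint (j+1) * ctilde (n-2-j) * qq ^ (2*(n-2-j)+1)) * Cs (j+2) := by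
      rw [← Finset.sum_range_reflect
        (fun j => Polynomial.C (qint (j+1) * ctilde (n-2-j) * qq ^ (2*(n-2-j)+1)) * Cs (j+2)) (n-1)]
      refine Finset.sum_congr rfl fun j hj => ?_
      rw [Finset.mem_range] at hj
      rw [show n-1-1-j+1 = n-j-1 from by omega, show n-2-(n-1-1-j) = j from by omega,
        show n-1-1-j+2 = n-j from by omega]
    have hmulS : Polynomial.C (qq ^ n) *
          (∑ j ∈ Finset.range n, Polynomial.C (qq ^ (n-1-j) * ctilde (n-1-j)) * Cs (j+1))
        = ∑ j ∈ Finset.range n,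
            Polynomial.C (qq ^ n * (qq ^ (n-1-j) * ctilde (n-1-j))) * Cs (j+1) := by
      rw [Finset.mul_sum]
      exact Finset.sum_congr rfl fun j _ => by rw [← mul_assoc, ← C_mul]
    have hsum : ∑ j ∈ Finset.range n,
          Polynomial.C (qint (j+1) * ctilde (n-1-j) * qq ^ (2*(n-1-j)+1)) * Cs (j+1)
        = (∑ j ∈ Finset.range n,
            Polynomial.C (qq ^ n * (qq ^ (n-1-j) * ctilde (n-1-j))) * Cs (j+1))
          + ∑ j ∈ Finset.range (n-1),
            Polynomial.C (qint (j+1) * ctilde (n-2-j) * qq ^ (2*(n-2-j)+1)) * Cs (j+2) := by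
      obtain ⟨s, rfl⟩ : ∃ s, n = s + 1 := ⟨n - 1, by omega⟩
      simp only [Nat.add_sub_cancel,
        show ∀ j : ℕ, s+1-2-j = s-1-j from fun j => by omega]
      rw [Finset.sum_range_succ'
        (fun j => Polynomial.C (qint (j+1) * ctilde (s-j) * qq ^ (2*(s-j)+1)) * Cs (j+1)) s]
      rw [Finset.sum_range_succ'
        (fun j => Polynomial.C (qq ^ (s+1) * (qq ^ (s-j) * ctilde (s-j))) * Cs (j+1)) s]
      have hf0 : (Polynomial.C (qint (0+1) * ctilde (s-0) * qq ^ (2*(s-0)+1)) : Polynomial (RatFunc ℚ)) * Cs (0+1)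
          = Polynomial.C (qq ^ (s+1) * (qq ^ (s-0) * ctilde (s-0))) * Cs (0+1) := by
        have hp : qq ^ (2*s+1) = qq ^ (s+1) * qq ^ s := by
          rw [← pow_add]; congr 1; omega
        have hsc0 : qint (0+1) * ctilde (s-0) * qq ^ (2*(s-0)+1)
            = qq ^ (s+1) * (qq ^ (s-0) * ctilde (s-0)) := by
          simp only [Nat.sub_zero]
          rw [qint_one, one_mul]
          linear_combination ctilde s * hp
        rw [hsc0]
      have hper : ∀ j ∈ Finset.range s,
          (Polynomial.C (qint (j+1+1) * ctilde (s-(j+1)) * qq ^ (2*(s-(j+1))+1)) : Polynomial (RatFunc ℚ)) * Cs (j+1+1)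
            = Polynomial.C (qq ^ (s+1) * (qq ^ (s-(j+1)) * ctilde (s-(j+1)))) * Cs (j+1+1)
              + Polynomial.C (qint (j+1) * ctilde (s-1-j) * qq ^ (2*(s-1-j)+1)) * Cs (j+2) := by
        intro j hj
        rw [Finset.mem_range] at hj
        rw [show s-(j+1) = s-1-j from by omega, show j+1+1 = j+2 from rfl]
        have hqs := qint_succ (j+1)
        rw [show j+1+1 = j+2 from rfl] at hqs
        have hpq : qq ^ (j+1) * qq ^ (2*(s-1-j)+1) = qq ^ (s+1) * qq ^ (s-1-j) := by
          rw [← pow_add, ← pow_add]; congr 1; omega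
        rw [← add_mul, ← C_add]
        have hsc : qint (j+2) * ctilde (s-1-j) * qq ^ (2*(s-1-j)+1)
            = qq ^ (s+1) * (qq ^ (s-1-j) * ctilde (s-1-j))
              + qint (j+1) * ctilde (s-1-j) * qq ^ (2*(s-1-j)+1) := by
          linear_combination (ctilde (s-1-j) * qq ^ (2*(s-1-j)+1)) * hqs + ctilde (s-1-j) * hpq
        rw [hsc]
      rw [Finset.sum_congr rfl hper, Finset.sum_add_distrib, hf0]
      ring
    -- the B' identity
    have hB' : Polynomial.C (qint (n+1)) * Cs (n+1)
        - (Polynomial.C (qint (2*n)) + Polynomial.C (qq ^ (2*n)) * Polynomial.X) * Cs n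
        + Polynomial.C (qq ^ (2*n-1)) * up * Cs n
        - Polynomial.C (qq ^ (2*n)) * (Cs (n+1)).comp sg
        - ∑ j ∈ Finset.range n,
            Polynomial.C (qint (n-j) * ctilde j * qq ^ (2*j+1)) * Cs (n-j) = 0 := by
      linear_combination IH + Cs (n+1) * hCs1 + Polynomial.C (qq ^ n) * hstar
        - (Cs (n+1)).comp sg * hpow3 + hmulS - hrB - hsum + hrI - Cs n * hCs2
        + Polynomial.C (qq ^ (2*n-1)) * Cs n * hup + Cs n * Polynomial.X * hpow2
    have hBtp := congrArg (fun p : Polynomial (RatFunc ℚ) => p.comp tp) hB'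
    simp only [sub_comp, add_comp, mul_comp, C_comp, X_comp, up_comp_tp, comp_sg_tp, sum_comp',
      zero_comp] at hBtp
    have htp : tp = Polynomial.C qq * Polynomial.X + 1 := rfl
    have ha : (Cs (n+1+1)).comp sg = Cs (n+1+1) - up * (Cs (n+1)).comp tp := by
      linear_combination -(h3 (n+1) (by omega))
    have hb : (Cs (n+1)).comp sg = Cs (n+1) - up * (Cs n).comp tp := by
      linear_combination -(h3 n hn)
    have hcS : ∑ j ∈ Finset.range n,
          Polynomial.C (qint (n-j) * ctilde j * qq ^ (2*j+1)) * (Cs (n+1-j)).comp sg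
        = (∑ j ∈ Finset.range n,
            Polynomial.C (qint (n-j) * ctilde j * qq ^ (2*j+1)) * Cs (n+1-j))
          - up * ∑ j ∈ Finset.range n,
              Polynomial.C (qint (n-j) * ctilde j * qq ^ (2*j+1)) * (Cs (n-j)).comp tp := by
      rw [Finset.mul_sum, ← Finset.sum_sub_distrib]
      refine Finset.sum_congr rfl fun j hj => ?_
      rw [Finset.mem_range] at hj
      have hj3 : (Cs (n-j+1)).comp sg = Cs (n-j+1) - up * (Cs (n-j)).comp tp := by
        linear_combination -(h3 (n-j) (by omega))
      rw [show n+1-j = n-j+1 from by omega, hj3]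
      ring
    have hfix : ((Polynomial.C (qint (n+1)) * Cs (n+1+1)) -
          ((Polynomial.C (qint (2*n+1)) + Polynomial.C (qq ^ (2*n+1)) * Polynomial.X) * Cs (n+1) +
            ∑ j ∈ Finset.range n,
              Polynomial.C (qint (n-j) * ctilde j * qq ^ (2*j+1)) * Cs (n+1-j))).comp sg
        = (Polynomial.C (qint (n+1)) * Cs (n+1+1)) -
          ((Polynomial.C (qint (2*n+1)) + Polynomial.C (qq ^ (2*n+1)) * Polynomial.X) * Cs (n+1) +
            ∑ j ∈ Finset.range n,
              Polynomial.C (qint (n-j) * ctilde j * qq ^ (2*j+1)) * Cs (n+1-j)) := by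
      simp only [sub_comp, add_comp, mul_comp, C_comp, X_comp, sum_comp']
      rw [ha, hb, hcS]
      rw [show sg = Polynomial.C qq⁻¹ * Polynomial.X - Polynomial.C qq⁻¹ from rfl]
      linear_combination (-up) * hBtp
        - up * Polynomial.C (qq ^ (2*n)) * (Cs n).comp tp * htp
        + (Cs n).comp tp * up * (hCs3 + (Polynomial.X - 1) * hCC_pow (2*n) + up * hpow2
            + Polynomial.C (qq ^ (2*n)) * hup)
        + Cs (n+1) * ((1 - Polynomial.X) * hCC_pow (2*n) - Polynomial.C (qq ^ (2*n)) * hup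
            - Polynomial.X * hc2')
    have hev : ((Polynomial.C (qint (n+1)) * Cs (n+1+1)) -
          ((Polynomial.C (qint (2*n+1)) + Polynomial.C (qq ^ (2*n+1)) * Polynomial.X) * Cs (n+1) +
            ∑ j ∈ Finset.range n,
              Polynomial.C (qint (n-j) * ctilde j * qq ^ (2*j+1)) * Cs (n+1-j))).eval (-qq⁻¹)
        = 0 := by
      simp only [eval_sub, eval_add, eval_mul, eval_C, eval_X, Polynomial.eval_finset_sum]
      rw [h2 (n+1+1) (by omega), h2 (n+1) (by omega), Finset.sum_eq_zero]
      · ring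
      · intro j hj
        rw [Finset.mem_range] at hj
        rw [h2 (n+1-j) (by omega)]
        ring
    have h0 := uniq _ hfix hev
    linear_combination h0

/-- For all `n ≥ 1`:
`[n]_q C_{n+1}(x|q) = ([2n-1]_q + x q^{2n-1}) C_n(x|q)
  + Σ_{j=0}^{n-2} [n-j-1]_q C̃_j(q) C_{n-j}(x|q) q^{2j+1}`. -/
theorem statement14 (Cs : ℕ → Polynomial (RatFunc ℚ))
    (h1 : Cs 1 = 1)
    (h2 : ∀ n, 2 ≤ n → (Cs n).eval (-qq⁻¹) = 0)
    (h3 : ∀ n, 1 ≤ n →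
      Cs (n + 1) -
          (Cs (n + 1)).comp (Polynomial.C qq⁻¹ * Polynomial.X - Polynomial.C qq⁻¹) =
        (1 + Polynomial.C (qq - 1) * Polynomial.X) *
          (Cs n).comp (Polynomial.C qq * Polynomial.X + 1))
    (n : ℕ) (hn : 1 ≤ n) :
    Polynomial.C (qint n) * Cs (n + 1) =
      (Polynomial.C (qint (2 * n - 1)) + Polynomial.C (qq ^ (2 * n - 1)) * Polynomial.X) *
          Cs n +
        ∑ j ∈ Finset.range (n - 1),
          Polynomial.C (qint (n - j - 1) * ctilde j * qq ^ (2 * j + 1)) * Cs (n - j) := by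
  
  have h3' : ∀ k, 1 ≤ k → Cs (k + 1) - (Cs (k + 1)).comp sg = up * (Cs k).comp tp :=
    fun k hk => h3 k hk
  exact main Cs h1 h2 h3' n hn
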